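/- The partition function Z^(n)(u;v;λ) of the n×n SOS model with domain wall boundary conditions, viewed as a function of u_n with all other variables fixed, is an elliptic polynomial of degree n with character χ given by χ(1) = (-1)^n and χ(τ) = (-1)^n exp(2πi(λ + Σ_{j=1}^n v_j)); i.e., Z satisfies Z(u_n+1) = (-1)^n Z(u_n) and Z(u_n+τ) = (-1)^n e^{2πi(λ+Σ_j v_j)} e^{-2πin·u_n - πinτ} Z(u_n). -/

import Mathlib

/-!
Only the last row of vertices depends on `u_n`, and along it the boundary conditions force
`x = d + 1`, so each of its weights is a constant times `θ(u_n - v_j + s)`. Shifting `u_n` by `1`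
multiplies every such weight by `-1`. Shifting by `τ` multiplies it by the theta multiplier of
`u_n - v_j` and by `e^{2πi(φ_{j+1} - φ_j)}` for a potential `φ` of the heights, so along the row
these factors telescope to `e^{2πi ℏ d_{nn}} = e^{2πiλ}`. Since `ℏ ≠ 0` the heights take finitely
many values, so `Z` is a finite sum of entire functions.
-/

/-- Boltzmann weight of an SOS vertex with surrounding heights
`x = d_{i,j-1}`, `y = d_{i-1,j-1}`, `z = d_{i-1,j}`, `d = d_{ij}`, spectral
parameter `w = u_i - v_j` and anisotropy `h = ℏ` (the dynamical parameter is
`ℏ d_{ij}`); the weight vanishes on non-admissible local configurations. -/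
noncomputable def sosW (θ : ℂ → ℂ) (h w x y z d : ℂ) : ℂ := by
  classical
  exact
    if x = d + 1 ∧ z = d + 1 ∧ y = d + 2 then θ (w + h)
    else if x = d - 1 ∧ z = d - 1 ∧ y = d - 2 then θ (w + h)
    else if x = d - 1 ∧ z = d + 1 ∧ y = d then θ w * θ (h * d + h) / θ (h * d)
    else if x = d + 1 ∧ z = d - 1 ∧ y = d then θ w * θ (h * d - h) / θ (h * d)
    else if x = d - 1 ∧ z = d - 1 ∧ y = d then θ (w + h * d) * θ h / θ (h * d)
    else if x = d + 1 ∧ z = d + 1 ∧ y = d then θ (w - h * d) * θ h / θ (-(h * d))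
    else 0

/-- A height configuration of the `n × n` SOS model with domain wall boundary
conditions: neighbouring heights differ by `±1`, the boundary heights are fixed
by the domain-wall conditions and the corner height satisfies `ℏ d_{nn} = λ`. -/
def SOSDWBC (n : ℕ) (h lam : ℂ) (d : Fin (n + 1) → Fin (n + 1) → ℂ) : Prop :=
  (∀ (i : Fin n) (j : Fin (n + 1)),
      d i.succ j - d i.castSucc j = 1 ∨ d i.succ j - d i.castSucc j = -1) ∧
  (∀ (i : Fin (n + 1)) (j : Fin n),
      d i j.succ - d i j.castSucc = 1 ∨ d i j.succ - d i j.castSucc = -1) ∧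
  (∀ i : Fin n, d i.castSucc (Fin.last n) - d i.succ (Fin.last n) = 1) ∧
  (∀ j : Fin n, d 0 j.castSucc - d 0 j.succ = -1) ∧
  (∀ i : Fin n, d i.castSucc 0 - d i.succ 0 = -1) ∧
  (∀ j : Fin n, d (Fin.last n) j.castSucc - d (Fin.last n) j.succ = 1) ∧
  h * d (Fin.last n) (Fin.last n) = lam

/-- The partition function `Z^(n)(u;v;λ)` of the `n × n` SOS model with domain
wall boundary conditions: the sum over all admissible height configurations of
the product of the Boltzmann weights of all vertices. -/
noncomputable def sosZ (n : ℕ) (θ : ℂ → ℂ) (h : ℂ) (u v : Fin n → ℂ) (lam : ℂ) : ℂ :=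
  ∑' dc : { d : Fin (n + 1) → Fin (n + 1) → ℂ // SOSDWBC n h lam d },
    ∏ i : Fin n, ∏ j : Fin n,
      sosW θ h (u i - v j) (dc.1 i.succ j.castSucc) (dc.1 i.castSucc j.castSucc)
        (dc.1 i.castSucc j.succ) (dc.1 i.succ j.succ)

open Complex Real

noncomputable def thetaMultiplier (τ x : ℂ) : ℂ :=
  -cexp (-(2 * π * I * x) - π * I * τ)

lemma thetaMultiplier_add (τ x c : ℂ) :
    thetaMultiplier τ (x + c) = thetaMultiplier τ x * cexp (-(2 * π * I * c)) := by
  rw [thetaMultiplier, thetaMultiplier, neg_mul, ← Complex.exp_add]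
  ring_nf

lemma prod_thetaMultiplier_sub (m : ℕ) (τ w : ℂ) (v : Fin m → ℂ) :
    ∏ j, thetaMultiplier τ (w - v j) =
      (-1) ^ m * cexp (2 * π * I * ∑ j, v j) * cexp (-(2 * π * I * m * w) - π * I * m * τ) := by
  simp only [thetaMultiplier, Finset.prod_neg, ← Complex.exp_sum, Finset.card_univ,
    Fintype.card_fin, mul_assoc, ← Complex.exp_add]
  congr 2
  simp only [Finset.sum_sub_distrib, ← Finset.mul_sum, Finset.sum_neg_distrib, mul_sub,
    Finset.sum_const, Finset.card_univ, Fintype.card_fin, nsmul_eq_mul]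
  ring

/-- `ℏ b` if `t = b + 1` and `0` if `t = b - 1`: chosen so that the factors, beyond the theta
multiplier, that the weights `a`, `b̄`, `c̄` pick up under `u ↦ u + τ` are differences of it. -/
noncomputable def heightPotential (h t b : ℂ) : ℂ := h * b * (t - b + 1) / 2

section weights

variable {θ : ℂ → ℂ} {h : ℂ}

lemma differentiable_sosW (hθ : Differentiable ℂ θ) (x y z d : ℂ) :
    Differentiable ℂ (fun w => sosW θ h w x y z d) := by
  unfold sosW
  split_ifs <;> fun_prop

lemma sosW_add_one (hθ : ∀ x, θ (x + 1) = -θ x) (w x y z d : ℂ) :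
    sosW θ h (w + 1) x y z d = -sosW θ h w x y z d := by
  unfold sosW
  have hadd : ∀ c, w + 1 + c = (w + c) + 1 := fun c => by ring
  have hsub : ∀ c, w + 1 - c = (w - c) + 1 := fun c => by ring
  split_ifs <;> simp only [hadd, hsub, hθ, neg_zero] <;> ring

lemma sosW_add_tau {τ : ℂ} (hθ : ∀ x, θ (x + τ) = thetaMultiplier τ x * θ x) {w x y z d : ℂ}
    (hx : x = d + 1) :
    sosW θ h (w + τ) x y z d = thetaMultiplier τ w *
      cexp (2 * π * I * (heightPotential h z d - heightPotential h y x)) * sosW θ h w x y z d := by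
  subst hx
  have hne : d + 1 ≠ d - 1 := fun e => two_ne_zero (by linear_combination e : (2 : ℂ) = 0)
  unfold sosW
  split_ifs with ha hb hb' hbbar hc hcbar
  · obtain ⟨-, rfl, rfl⟩ := ha
    rw [add_right_comm, hθ, thetaMultiplier_add, heightPotential, heightPotential]
    ring_nf
  · exact absurd hb.1 hne
  · exact absurd hb'.1 hne
  · obtain ⟨-, rfl, rfl⟩ := hbbar
    rw [hθ, heightPotential, heightPotential]
    ring_nf
    rw [Complex.exp_zero, mul_one]
  · exact absurd hc.1 hne
  · obtain ⟨-, rfl, rfl⟩ := hcbar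
    rw [sub_eq_add_neg (w + τ), add_right_comm, hθ, thetaMultiplier_add, heightPotential,
      heightPotential, ← sub_eq_add_neg]
    ring_nf
  · simp

end weights

lemma Fin.sum_succ_sub_castSucc {M : Type*} [AddCommGroup M] {n : ℕ} (f : Fin (n + 1) → M) :
    ∑ i : Fin n, (f i.succ - f i.castSucc) = f (Fin.last n) - f 0 := by
  rw [Finset.sum_sub_distrib, sub_eq_sub_iff_add_eq_add, add_comm, ← Fin.sum_univ_succ,
    Fin.sum_univ_castSucc, add_comm]

lemma exists_int_eq_last_add_of_steps {m : ℕ} {f : Fin (m + 1) → ℂ}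
    (hf : ∀ i : Fin m, f i.succ - f i.castSucc = 1 ∨ f i.succ - f i.castSucc = -1)
    (j : Fin (m + 1)) : ∃ k : ℤ, k.natAbs + j ≤ m ∧ f j = f (Fin.last m) + k := by
  induction j using Fin.reverseInduction with
  | last => exact ⟨0, by simp, by simp⟩
  | cast i ih =>
    obtain ⟨k, hk, hfk⟩ := ih
    rw [Fin.val_succ] at hk
    rcases hf i with hs | hs
    · exact ⟨k - 1, by rw [Fin.val_castSucc]; omega, by push_cast; linear_combination hfk - hs⟩
    · exact ⟨k + 1, by rw [Fin.val_castSucc]; omega, by push_cast; linear_combination hfk - hs⟩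

lemma finite_sosDWBC (m : ℕ) {h : ℂ} (lam : ℂ) (hh : h ≠ 0) :
    Finite {d : Fin (m + 1) → Fin (m + 1) → ℂ // SOSDWBC m h lam d} := by
  set S : Set ℂ := (fun k : ℤ => lam / h + k) '' Set.Icc (-(2 * m : ℤ)) (2 * m)
  have hmem : ∀ d, SOSDWBC m h lam d → ∀ i j, d i j ∈ S := by
    rintro d ⟨hcol, hrow, -, -, -, -, hcorner⟩ i j
    obtain ⟨k₁, hk₁, e₁⟩ := exists_int_eq_last_add_of_steps (hrow i) j
    obtain ⟨k₂, hk₂, e₂⟩ :=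
      exists_int_eq_last_add_of_steps (f := fun i => d i (Fin.last m)) (hcol · _) i
    have hlast : d (Fin.last m) (Fin.last m) = lam / h := by
      rw [eq_div_iff hh, mul_comm, hcorner]
    refine ⟨k₂ + k₁, ⟨by omega, by omega⟩, ?_⟩
    push_cast
    linear_combination -e₁ - e₂ - hlast
  have hfin : {d | SOSDWBC m h lam d}.Finite :=
    (Set.Finite.pi fun _ => Set.Finite.pi fun _ => (Set.finite_Icc _ _).image _).subset
      fun d hd i _ j _ => hmem d hd i j
  exact hfin.to_subtype

noncomputable def lastRowWeight (θ : ℂ → ℂ) (h : ℂ) {n : ℕ} (v : Fin (n + 1) → ℂ)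
    (d : Fin (n + 2) → Fin (n + 2) → ℂ) (w : ℂ) : ℂ :=
  ∏ j, sosW θ h (w - v j) (d (Fin.last (n + 1)) j.castSucc) (d (Fin.last n).castSucc j.castSucc)
    (d (Fin.last n).castSucc j.succ) (d (Fin.last (n + 1)) j.succ)

section lastRow

variable {θ : ℂ → ℂ} {h : ℂ} {n : ℕ} {v : Fin (n + 1) → ℂ} {d : Fin (n + 2) → Fin (n + 2) → ℂ}

lemma differentiable_lastRowWeight (hθ : Differentiable ℂ θ) :
    Differentiable ℂ (lastRowWeight θ h v d) :=
  Differentiable.fun_finsetProd fun _ _ =>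
    (differentiable_sosW hθ _ _ _ _).comp (differentiable_id.sub_const _)

lemma lastRowWeight_add_one (hθ : ∀ x, θ (x + 1) = -θ x) (w : ℂ) :
    lastRowWeight θ h v d (w + 1) = (-1) ^ (n + 1) * lastRowWeight θ h v d w := by
  simp only [lastRowWeight, add_sub_right_comm w 1, sosW_add_one hθ, Finset.prod_neg,
    Finset.card_univ, Fintype.card_fin]

lemma lastRowWeight_add_tau {τ lam : ℂ} (hθ : ∀ x, θ (x + τ) = thetaMultiplier τ x * θ x)
    (hd : SOSDWBC (n + 1) h lam d) (w : ℂ) :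
    lastRowWeight θ h v d (w + τ) =
      (∏ j, thetaMultiplier τ (w - v j)) * cexp (2 * π * I * lam) * lastRowWeight θ h v d w := by
  obtain ⟨-, -, hright, -, hleft, hbottom, hcorner⟩ := hd
  set φ : Fin (n + 2) → ℂ :=
    fun k => heightPotential h (d (Fin.last n).castSucc k) (d (Fin.last (n + 1)) k)
  have hφ : φ (Fin.last (n + 1)) - φ 0 = lam := by
    have hr := hright (Fin.last n)
    have hl := hleft (Fin.last n)
    rw [Fin.succ_last] at hr hl
    simp only [φ, heightPotential]
    linear_combination (h * d (Fin.last (n + 1)) (Fin.last (n + 1)) / 2) * hr + hcorner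
      - (h * d (Fin.last (n + 1)) 0 / 2) * hl
  have hvertex : ∀ j : Fin (n + 1), sosW θ h (w + τ - v j) (d (Fin.last (n + 1)) j.castSucc)
      (d (Fin.last n).castSucc j.castSucc) (d (Fin.last n).castSucc j.succ)
      (d (Fin.last (n + 1)) j.succ) = thetaMultiplier τ (w - v j) *
        cexp (2 * π * I * (φ j.succ - φ j.castSucc)) *
        sosW θ h (w - v j) (d (Fin.last (n + 1)) j.castSucc) (d (Fin.last n).castSucc j.castSucc)
          (d (Fin.last n).castSucc j.succ) (d (Fin.last (n + 1)) j.succ) := fun j => by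
    rw [add_sub_right_comm]
    exact sosW_add_tau hθ (by linear_combination hbottom j)
  simp only [lastRowWeight, hvertex, Finset.prod_mul_distrib, ← Complex.exp_sum, ← Finset.mul_sum,
    Fin.sum_succ_sub_castSucc, hφ]

end lastRow

section partitionFunction

variable {n : ℕ} {θ : ℂ → ℂ} {h lam : ℂ} {u v : Fin (n + 1) → ℂ}

lemma sosZ_update_last (w : ℂ) :
    sosZ (n + 1) θ h (Function.update u (Fin.last n) w) v lam =
      ∑' d : {d // SOSDWBC (n + 1) h lam d}, lastRowWeight θ h v d.1 w *
        ∏ i : Fin n, ∏ j, sosW θ h (u i.castSucc - v j) (d.1 i.castSucc.succ j.castSucc)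
          (d.1 i.castSucc.castSucc j.castSucc) (d.1 i.castSucc.castSucc j.succ)
          (d.1 i.castSucc.succ j.succ) := by
  refine tsum_congr fun d => ?_
  rw [Fin.prod_univ_castSucc, mul_comm]
  simp only [Function.update_self, Function.update_of_ne (Fin.castSucc_ne_last _), Fin.succ_last,
    lastRowWeight]

lemma sosZ_update_last_add {w s c : ℂ}
    (hrow : ∀ d, SOSDWBC (n + 1) h lam d →
      lastRowWeight θ h v d (w + s) = c * lastRowWeight θ h v d w) :
    sosZ (n + 1) θ h (Function.update u (Fin.last n) (w + s)) v lam =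
      c * sosZ (n + 1) θ h (Function.update u (Fin.last n) w) v lam := by
  rw [sosZ_update_last, sosZ_update_last, ← tsum_mul_left]
  exact tsum_congr fun d => by rw [hrow d.1 d.2, mul_assoc]

lemma differentiable_sosZ_update_last (hθ : Differentiable ℂ θ) (hh : h ≠ 0) :
    Differentiable ℂ fun w => sosZ (n + 1) θ h (Function.update u (Fin.last n) w) v lam := by
  have := finite_sosDWBC (n + 1) lam hh
  have := Fintype.ofFinite {d // SOSDWBC (n + 1) h lam d}
  simp only [sosZ_update_last, tsum_fintype]
  exact Differentiable.fun_sum fun d _ => (differentiable_lastRowWeight hθ).mul_const _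

end partitionFunction

theorem sosZ_elliptic_polynomial_general (n : ℕ) (τ : ℂ) (θ : ℂ → ℂ)
    (hθd : Differentiable ℂ θ)
    (hp1 : ∀ x, θ (x + 1) = -θ x)
    (hp2 : ∀ x, θ (x + τ) =
      -Complex.exp (-(2 * (Real.pi : ℂ) * Complex.I * x) - (Real.pi : ℂ) * Complex.I * τ) * θ x)
    (h lam : ℂ) (hh : h ≠ 0) (u v : Fin (n + 1) → ℂ) :
    Differentiable ℂ
      (fun w : ℂ => sosZ (n + 1) θ h (Function.update u (Fin.last n) w) v lam) ∧
    (∀ w : ℂ,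
      sosZ (n + 1) θ h (Function.update u (Fin.last n) (w + 1)) v lam =
        (-1 : ℂ) ^ (n + 1) * sosZ (n + 1) θ h (Function.update u (Fin.last n) w) v lam) ∧
    (∀ w : ℂ,
      sosZ (n + 1) θ h (Function.update u (Fin.last n) (w + τ)) v lam =
        (-1 : ℂ) ^ (n + 1) *
          Complex.exp (2 * (Real.pi : ℂ) * Complex.I * (lam + ∑ j, v j)) *
          Complex.exp (-(2 * (Real.pi : ℂ) * Complex.I * ((n : ℂ) + 1) * w) -
            (Real.pi : ℂ) * Complex.I * ((n : ℂ) + 1) * τ) *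
          sosZ (n + 1) θ h (Function.update u (Fin.last n) w) v lam) := by
  refine ⟨differentiable_sosZ_update_last hθd hh,
    fun w => sosZ_update_last_add fun d _ => lastRowWeight_add_one hp1 w, fun w => ?_⟩
  rw [sosZ_update_last_add fun d hd => lastRowWeight_add_tau hp2 hd w, prod_thetaMultiplier_sub,
    mul_add, Complex.exp_add]
  push_cast
  ring

/-- The SOS partition function with DWBC, as a function of `u_{n}` (the last
spectral variable), is an elliptic polynomial of degree `n` with character
`χ(1) = (-1)^n`, `χ(τ) = (-1)^n e^{2πi(λ + Σ_j v_j)}`: it is entire in `u_n` and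
satisfies `Z(u_n+1) = (-1)^n Z(u_n)` and
`Z(u_n+τ) = (-1)^n e^{2πi(λ+Σ v_j)} e^{-2πin u_n - πinτ} Z(u_n)`.
(Stated for lattices of size `n+1`.) -/
theorem sosZ_elliptic_polynomial (n : ℕ) (τ : ℂ) (hτ : 0 < τ.im) (θ : ℂ → ℂ)
    (hθd : Differentiable ℂ θ) (hodd : ∀ x, θ (-x) = -θ x)
    (hp1 : ∀ x, θ (x + 1) = -θ x)
    (hp2 : ∀ x, θ (x + τ) =
      -Complex.exp (-(2 * (Real.pi : ℂ) * Complex.I * x) - (Real.pi : ℂ) * Complex.I * τ) * θ x)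
    (hd0 : HasDerivAt θ 1 0)
    (h lam : ℂ) (hh : h ≠ 0) (u v : Fin (n + 1) → ℂ) :
    Differentiable ℂ
      (fun w : ℂ => sosZ (n + 1) θ h (Function.update u (Fin.last n) w) v lam) ∧
    (∀ w : ℂ,
      sosZ (n + 1) θ h (Function.update u (Fin.last n) (w + 1)) v lam =
        (-1 : ℂ) ^ (n + 1) * sosZ (n + 1) θ h (Function.update u (Fin.last n) w) v lam) ∧
    (∀ w : ℂ,
      sosZ (n + 1) θ h (Function.update u (Fin.last n) (w + τ)) v lam =
        (-1 : ℂ) ^ (n + 1) *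
          Complex.exp (2 * (Real.pi : ℂ) * Complex.I * (lam + ∑ j, v j)) *
          Complex.exp (-(2 * (Real.pi : ℂ) * Complex.I * ((n : ℂ) + 1) * w) -
            (Real.pi : ℂ) * Complex.I * ((n : ℂ) + 1) * τ) *
          sosZ (n + 1) θ h (Function.update u (Fin.last n) w) v lam) :=
  sosZ_elliptic_polynomial_general n τ θ hθd hp1 hp2 h lam hh u v
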